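/- The double integral ∫₀¹∫₀¹ 6a(1-a)(a(3-b)+b)/(1+a(2-b)+b) db da equals 27·ln 3 − 28·ln 2 − 19/2. -/

import Mathlib

/-!
In the inner integral the numerator is the denominator `D(b) = (1 + 2a) + (1 - a) b` minus `1 - a`,
so the integrand is `6a(1-a) (1 - (1-a)/D(b))`, whose `b`-integral is
`6a(1-a) (1 - log (2 + a) + log (1 + 2a))`. Writing `log (1 + 2a) = log 2 + log (1/2 + a)`, the outer
integral reduces to `∫₀¹ 6a(1-a) log (c + a) da` for `c = 2` and `c = 1/2`, which integration by
parts and polynomial division evaluate in closed form.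
-/

open Real Set intervalIntegral
open MeasureTheory (volume)

lemma affine_pos_of_mem_uIcc {p q b : ℝ} (hp : 0 < p) (hpq : 0 < p + q)
    (hb : b ∈ uIcc (0:ℝ) 1) : 0 < p + q * b := by
  rw [uIcc_of_le zero_le_one] at hb
  obtain ⟨hb0, hb1⟩ := hb
  rcases le_total 0 q with hq | hq
  · nlinarith [mul_nonneg hq hb0]
  · nlinarith [mul_nonneg_of_nonpos_of_nonpos hq (sub_nonpos.2 hb1)]

lemma intervalIntegrable_div_affine {p q : ℝ} (hp : 0 < p) (hpq : 0 < p + q) :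
    IntervalIntegrable (fun b => q / (p + q * b)) volume 0 1 :=
  (continuousOn_const.div (by fun_prop) fun _ hb =>
    (affine_pos_of_mem_uIcc hp hpq hb).ne').intervalIntegrable

lemma integral_div_affine {p q : ℝ} (hp : 0 < p) (hpq : 0 < p + q) :
    ∫ b in (0:ℝ)..1, q / (p + q * b) = log (p + q) - log p := by
  have hderiv : ∀ b ∈ uIcc (0:ℝ) 1,
      HasDerivAt (fun b => log (p + q * b)) (q / (p + q * b)) b := fun b hb => by
    simpa using (((hasDerivAt_id b).const_mul q).const_add p).log
      (affine_pos_of_mem_uIcc hp hpq hb).ne'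
  rw [integral_eq_sub_of_hasDerivAt hderiv (intervalIntegrable_div_affine hp hpq)]
  simp

lemma inner_integral_eq {a : ℝ} (ha : -(1 / 2) < a) :
    ∫ b in (0:ℝ)..1, 6 * a * (1 - a) * (a * (3 - b) + b) / (1 + a * (2 - b) + b)
      = 6 * a * (1 - a) * (1 - (log (2 + a) - log (1 + 2 * a))) := by
  have hp : 0 < 1 + 2 * a := by linarith
  have hpq : 0 < 1 + 2 * a + (1 - a) := by linarith
  have hsplit : EqOn
      (fun b => 6 * a * (1 - a) * (a * (3 - b) + b) / (1 + a * (2 - b) + b))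
      (fun b => 6 * a * (1 - a) * (1 - (1 - a) / (1 + 2 * a + (1 - a) * b))) (uIcc 0 1) := by
    intro b hb
    have hD := (affine_pos_of_mem_uIcc hp hpq hb).ne'
    dsimp only
    rw [mul_div_assoc, show 1 + a * (2 - b) + b = 1 + 2 * a + (1 - a) * b by ring,
      show a * (3 - b) + b = 1 + 2 * a + (1 - a) * b - (1 - a) by ring, sub_div, div_self hD]
  rw [integral_congr hsplit, integral_const_mul,
    integral_sub intervalIntegrable_const (intervalIntegrable_div_affine hp hpq),
    integral_div_affine hp hpq, integral_const, show 1 + 2 * a + (1 - a) = 2 + a by ring]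
  simp

lemma integral_six_mul_mul_one_sub : ∫ a in (0:ℝ)..1, 6 * a * (1 - a) = 1 := by
  have hexpand : (fun a : ℝ => 6 * a * (1 - a)) = fun a => 6 * a - 6 * a ^ 2 := by ext; ring
  rw [hexpand, integral_sub ((by fun_prop : Continuous fun a : ℝ => 6 * a).intervalIntegrable 0 1)
    ((by fun_prop : Continuous fun a : ℝ => 6 * a ^ 2).intervalIntegrable 0 1), integral_const_mul,
    integral_const_mul, integral_id, integral_pow]
  norm_num

lemma intervalIntegrable_mul_log_add (c : ℝ) :
    IntervalIntegrable (fun a => 6 * a * (1 - a) * log (c + a)) volume 0 1 := by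
  have hlog := (intervalIntegrable_log' (a := c) (b := c + 1)).comp_add_left c
  simp only [sub_self, add_sub_cancel_left] at hlog
  exact hlog.continuousOn_mul (g := fun a : ℝ => 6 * a * (1 - a)) (by fun_prop)

/-- The antiderivative comes from integrating by parts against `3a² - 2a³` and dividing:
`(3a² - 2a³) / (c + a) = 2a² - (3 + 2c) a + c (3 + 2c) - c² (3 + 2c) / (c + a)`. -/
lemma integral_mul_log_add {c : ℝ} (hc : 0 < c) :
    ∫ a in (0:ℝ)..1, 6 * a * (1 - a) * log (c + a)
      = (1 + c) ^ 2 * (1 - 2 * c) * log (1 + c) + c ^ 2 * (3 + 2 * c) * log c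
        + 2 * c ^ 2 + 2 * c - 5 / 6 := by
  have hderiv : ∀ a ∈ uIcc (0:ℝ) 1, HasDerivAt
      (fun a => (3 * a ^ 2 - 2 * a ^ 3 - c ^ 2 * (3 + 2 * c)) * log (c + a)
        + (2 * a ^ 3 / 3 - (3 + 2 * c) * a ^ 2 / 2 + c * (3 + 2 * c) * a))
      (6 * a * (1 - a) * log (c + a)) a := fun a ha => by
    rw [uIcc_of_le zero_le_one] at ha
    have hca : c + a ≠ 0 := by linarith [ha.1]
    have hlog : HasDerivAt (fun a => log (c + a)) (1 / (c + a)) a := by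
      simpa using ((hasDerivAt_id a).const_add c).log hca
    have hcubic : HasDerivAt (fun a => 3 * a ^ 2 - 2 * a ^ 3 - c ^ 2 * (3 + 2 * c))
        (6 * a * (1 - a)) a :=
      ((((hasDerivAt_pow 2 a).const_mul 3).sub
        ((hasDerivAt_pow 3 a).const_mul 2)).sub_const (c ^ 2 * (3 + 2 * c))).congr_deriv
        (by push_cast; ring)
    have hquad : HasDerivAt (fun a => 2 * a ^ 3 / 3 - (3 + 2 * c) * a ^ 2 / 2 + c * (3 + 2 * c) * a)
        (2 * a ^ 2 - (3 + 2 * c) * a + c * (3 + 2 * c)) a :=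
      (((((hasDerivAt_pow 3 a).const_mul 2).div_const 3).sub
        (((hasDerivAt_pow 2 a).const_mul (3 + 2 * c)).div_const 2)).add
        ((hasDerivAt_id a).const_mul (c * (3 + 2 * c)))).congr_deriv (by push_cast; ring)
    refine ((hcubic.mul hlog).add hquad).congr_deriv ?_
    field_simp
    ring
  rw [integral_eq_sub_of_hasDerivAt hderiv (intervalIntegrable_mul_log_add c)]
  simp only [add_zero, add_comm c 1]
  ring

theorem stit_muVT_EP11 :
    (∫ a in (0:ℝ)..1, ∫ b in (0:ℝ)..1,
        6 * a * (1 - a) * (a * (3 - b) + b) / (1 + a * (2 - b) + b))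
      = 27 * Real.log 3 - 28 * Real.log 2 - 19/2 := by
  have hinner : EqOn
      (fun a => ∫ b in (0:ℝ)..1, 6 * a * (1 - a) * (a * (3 - b) + b) / (1 + a * (2 - b) + b))
      (fun a => (1 + log 2) * (6 * a * (1 - a)) - 6 * a * (1 - a) * log (2 + a)
        + 6 * a * (1 - a) * log (1 / 2 + a)) (uIcc 0 1) := by
    intro a ha
    rw [uIcc_of_le zero_le_one] at ha
    dsimp only
    rw [inner_integral_eq (by linarith [ha.1]), show 1 + 2 * a = 2 * (1 / 2 + a) by ring,
      log_mul two_ne_zero (by linarith [ha.1])]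
    ring
  have hweight : IntervalIntegrable (fun a : ℝ => (1 + log 2) * (6 * a * (1 - a)))
      volume 0 1 := (by fun_prop : Continuous _).intervalIntegrable 0 1
  rw [integral_congr hinner,
    integral_add (hweight.sub (intervalIntegrable_mul_log_add 2)) (intervalIntegrable_mul_log_add _),
    integral_sub hweight (intervalIntegrable_mul_log_add 2), integral_const_mul,
    integral_six_mul_mul_one_sub, integral_mul_log_add two_pos, integral_mul_log_add one_half_pos]
  have h3 : log (1 + 1 / 2) = log 3 - log 2 := by
    rw [show (1:ℝ) + 1 / 2 = 3 / 2 by norm_num, log_div three_ne_zero two_ne_zero]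
  rw [h3, one_div, log_inv, show (1:ℝ) + 2 = 3 by norm_num]
  ring
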